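/- Let y ∈ ℝⁿ be non-constant, i.e., y ≠ ȳ·1 where ȳ = (1/n)Σᵢ yᵢ and 1 is the all-ones vector, let X ∈ ℝ^{n×q}, and let λ > 0. Define F(c, β) = ‖y − c·1 − Xβ‖₂ + λ‖β‖₁ for c ∈ ℝ and β ∈ ℝ^q. Then (c, β) = (ȳ, 0) is a global minimizer of F if and only if λ ≥ λ₀(y, X) := ‖Xᵀ(y − ȳ·1)‖_∞ / ‖y − ȳ·1‖₂. -/

import Mathlib

/-!
Put `r = y − ȳ·1`, so that `∑ rᵢ = 0` and `r ≠ 0`; shifting `c` by `ȳ`, the claim is that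
`‖r‖ ≤ ‖r − d·1 − Xβ‖ + λ‖β‖₁` for all `d, β` iff `‖Xᵀr‖_∞ ≤ λ‖r‖`. If the latter holds then,
as `r ⊥ 1`, Cauchy–Schwarz and Hölder give
`‖r‖² = ⟪r, r − d·1 − Xβ⟫ + ⟪Xᵀr, β⟫ ≤ ‖r‖ (‖r − d·1 − Xβ‖ + λ‖β‖₁)`.
Conversely, testing `β = ±t eⱼ` with `t → 0⁺` yields the first-order condition
`±(Xᵀr)ⱼ ≤ λ‖r‖`, since `‖r − t u‖ = ‖r‖ − t⟪r, u⟫/‖r‖ + O(t²)`.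
-/

open scoped BigOperators

/-- Euclidean norm of a vector in `ℝᵐ`. -/
noncomputable def norm2 {m : ℕ} (v : Fin m → ℝ) : ℝ := Real.sqrt (∑ i, (v i) ^ 2)

/-- ℓ1-norm of a vector in `ℝᵐ`. -/
noncomputable def norm1 {m : ℕ} (v : Fin m → ℝ) : ℝ := ∑ i, |v i|

/-- Sup-norm of a vector in `ℝᵐ`: `‖v‖_∞ = maxᵢ |vᵢ|`. -/
noncomputable def norminf {m : ℕ} (v : Fin m → ℝ) : ℝ := ⨆ i, |v i|

/-- The SRAMlet objective `F(c, β) = ‖y − c·1 − Xβ‖₂ + λ‖β‖₁`. -/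
noncomputable def sramletObj {n q : ℕ} (y : Fin n → ℝ) (X : Matrix (Fin n) (Fin q) ℝ)
    (lam : ℝ) (c : ℝ) (β : Fin q → ℝ) : ℝ :=
  norm2 (fun i => y i - c - X.mulVec β i) + lam * norm1 β

/-- The zero-thresholding function
`λ₀(y, X) = ‖Xᵀ(y − ȳ·1)‖_∞ / ‖y − ȳ·1‖₂` with `ȳ = (1/n)Σᵢ yᵢ`. -/
noncomputable def zeroThresh {n q : ℕ} (y : Fin n → ℝ)
    (X : Matrix (Fin n) (Fin q) ℝ) : ℝ :=
  norminf (X.transpose.mulVec (fun i => y i - (∑ j, y j) / n)) /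
    norm2 (fun i => y i - (∑ j, y j) / n)

open Filter Topology
open scoped InnerProductSpace Matrix

section InnerProductSpace

variable {E : Type*} [NormedAddCommGroup E] [InnerProductSpace ℝ E]

theorem norm_le_norm_sub_add_of_real_inner_le {r z : E} {b : ℝ} (hr : r ≠ 0)
    (h : ⟪r, z⟫_ℝ ≤ b * ‖r‖) : ‖r‖ ≤ ‖r - z‖ + b := by
  refine le_of_mul_le_mul_left ?_ (norm_pos_iff.mpr hr)
  calc ‖r‖ * ‖r‖ = ⟪r, r - z⟫_ℝ + ⟪r, z⟫_ℝ := by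
        rw [inner_sub_right, real_inner_self_eq_norm_mul_norm]; ring
    _ ≤ ‖r‖ * ‖r - z‖ + b * ‖r‖ := add_le_add (real_inner_le_norm _ _) h
    _ = ‖r‖ * (‖r - z‖ + b) := by ring

theorem real_inner_le_of_forall_norm_le_norm_sub_smul_add {r u : E} {a : ℝ} (hr : r ≠ 0)
    (h : ∀ t > 0, ‖r‖ ≤ ‖r - t • u‖ + a * t) : ⟪r, u⟫_ℝ ≤ a * ‖r‖ := by
  have hr' : 0 < ‖r‖ := norm_pos_iff.mpr hr
  have key : ∀ t > 0, a * t < ‖r‖ → ⟪r, u⟫_ℝ - a * ‖r‖ ≤ t * (‖u‖ ^ 2 - a ^ 2) / 2 := by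
    intro t ht hat
    -- square `‖r‖ - a t ≤ ‖r - t • u‖`, then divide by `t`
    have hsq : (‖r‖ - a * t) ^ 2 ≤ ‖r - t • u‖ ^ 2 :=
      pow_le_pow_left₀ (by linarith) (by linarith [h t ht]) 2
    rw [norm_sub_sq_real, inner_smul_right, norm_smul, Real.norm_of_nonneg ht.le] at hsq
    rw [le_div_iff₀ two_pos]
    nlinarith
  have hlim : Tendsto (fun t : ℝ => t * (‖u‖ ^ 2 - a ^ 2) / 2) (𝓝[>] 0) (𝓝 0) :=
    (Continuous.tendsto' (by fun_prop) 0 0 (by simp)).mono_left nhdsWithin_le_nhds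
  have hsmall : ∀ᶠ t in 𝓝[>] (0 : ℝ), a * t < ‖r‖ :=
    (((continuous_const_mul a).tendsto' 0 0 (mul_zero a)).mono_left nhdsWithin_le_nhds).eventually
      (gt_mem_nhds hr')
  have := ge_of_tendsto hlim <| by
    filter_upwards [self_mem_nhdsWithin, hsmall] with t ht hat using key t ht hat
  linarith

end InnerProductSpace

section Coordinates

variable {m n q : ℕ}

theorem norm2_eq_norm_toLp (v : Fin m → ℝ) : norm2 v = ‖WithLp.toLp 2 v‖ := by
  simp [norm2, EuclideanSpace.norm_eq]

theorem dotProduct_le_norminf_mul_norm1 (v w : Fin m → ℝ) : v ⬝ᵥ w ≤ norminf v * norm1 w := by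
  rw [dotProduct, norm1, Finset.mul_sum]
  refine Finset.sum_le_sum fun k _ => ?_
  calc v k * w k ≤ |v k| * |w k| := by rw [← abs_mul]; exact le_abs_self _
    _ ≤ norminf v * |w k| :=
      mul_le_mul_of_nonneg_right (le_ciSup (Set.finite_range fun i => |v i|).bddAbove k)
        (abs_nonneg _)

theorem norm1_smul_of_nonneg {t : ℝ} (ht : 0 ≤ t) (w : Fin m → ℝ) :
    norm1 (t • w) = t * norm1 w := by
  simp [norm1, abs_mul, abs_of_nonneg ht, Finset.mul_sum]

theorem norm1_single (j : Fin m) (s : ℝ) : norm1 (Pi.single j s) = |s| := by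
  rw [norm1, Finset.sum_eq_single j (fun k _ hk => by simp [hk]) (by simp)]
  simp

theorem real_inner_toLp_mulVec (r : Fin n → ℝ) (X : Matrix (Fin n) (Fin q) ℝ) (w : Fin q → ℝ) :
    ⟪WithLp.toLp 2 r, WithLp.toLp 2 (X *ᵥ w)⟫_ℝ = (Xᵀ *ᵥ r) ⬝ᵥ w := by
  rw [EuclideanSpace.inner_toLp_toLp, star_trivial, dotProduct_comm, Matrix.dotProduct_mulVec,
    Matrix.mulVec_transpose]

theorem real_inner_toLp_const {r : Fin n → ℝ} (hr : ∑ i, r i = 0) (d : ℝ) :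
    ⟪WithLp.toLp 2 r, WithLp.toLp 2 (fun _ => d)⟫_ℝ = 0 := by
  simp [EuclideanSpace.inner_toLp_toLp, dotProduct, ← Finset.mul_sum, hr]

theorem toLp_sub_const_sub (r : Fin n → ℝ) (d : ℝ) (z : Fin n → ℝ) :
    WithLp.toLp 2 (fun i => r i - d - z i) =
      WithLp.toLp 2 r - (WithLp.toLp 2 (fun _ => d) + WithLp.toLp 2 z) := by
  ext i; simp; ring

theorem forall_norm2_le_residual_iff {r : Fin n → ℝ} (X : Matrix (Fin n) (Fin q) ℝ)
    {lam : ℝ} (hlam : 0 ≤ lam) (hr : r ≠ 0) (hsum : ∑ i, r i = 0) :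
    (∀ (d : ℝ) (β : Fin q → ℝ),
        norm2 r ≤ norm2 (fun i => r i - d - (X *ᵥ β) i) + lam * norm1 β) ↔
      norminf (Xᵀ *ᵥ r) ≤ lam * norm2 r := by
  have hr' : WithLp.toLp 2 r ≠ 0 := by simpa using hr
  simp only [norm2_eq_norm_toLp, toLp_sub_const_sub]
  constructor
  · intro hmin
    have hdir : ∀ w : Fin q → ℝ, (Xᵀ *ᵥ r) ⬝ᵥ w ≤ lam * norm1 w * ‖WithLp.toLp 2 r‖ := by
      intro w
      rw [← real_inner_toLp_mulVec]
      refine real_inner_le_of_forall_norm_le_norm_sub_smul_add hr' fun t ht => ?_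
      simpa [← Pi.zero_def, Matrix.mulVec_smul, norm1_smul_of_nonneg ht.le, mul_comm,
        mul_left_comm] using hmin 0 (t • w)
    refine Real.iSup_le (fun j => abs_le.mpr ⟨?_, ?_⟩) (by positivity)
    · exact neg_le.mpr (by simpa [norm1_single] using hdir (Pi.single j (-1)))
    · simpa [norm1_single] using hdir (Pi.single j 1)
  · intro h d β
    refine norm_le_norm_sub_add_of_real_inner_le hr' ?_
    rw [inner_add_right, real_inner_toLp_const hsum, real_inner_toLp_mulVec, zero_add]
    calc (Xᵀ *ᵥ r) ⬝ᵥ β ≤ norminf (Xᵀ *ᵥ r) * norm1 β := dotProduct_le_norminf_mul_norm1 _ _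
      _ ≤ lam * ‖WithLp.toLp 2 r‖ * norm1 β :=
        mul_le_mul_of_nonneg_right h (Finset.sum_nonneg fun _ _ => abs_nonneg _)
      _ = lam * norm1 β * ‖WithLp.toLp 2 r‖ := by ring

end Coordinates

/-- For non-constant `y` and `λ > 0`, `(c, β) = (ȳ, 0)` is a global minimizer of
the SRAMlet objective `F(c, β) = ‖y − c·1 − Xβ‖₂ + λ‖β‖₁` iff `λ ≥ λ₀(y, X)`. -/
theorem null_fit_isMinimizer_iff {n q : ℕ} (y : Fin n → ℝ)
    (X : Matrix (Fin n) (Fin q) ℝ) (lam : ℝ) (hlam : 0 < lam)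
    (hy : y ≠ fun _ => (∑ j, y j) / n) :
    (∀ (c : ℝ) (β : Fin q → ℝ),
        sramletObj y X lam ((∑ j, y j) / n) 0 ≤ sramletObj y X lam c β) ↔
      zeroThresh y X ≤ lam := by
  set ybar := (∑ j, y j) / n
  set r : Fin n → ℝ := fun i => y i - ybar
  have hr : r ≠ 0 := fun h => hy (funext fun i => sub_eq_zero.mp (congrFun h i))
  have hsum : ∑ i, r i = 0 := by
    rcases Nat.eq_zero_or_pos n with rfl | hn
    · simp
    · simp [r, ybar, Finset.sum_sub_distrib, mul_div_cancel₀, hn.ne']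
  have hobj : ∀ c β, sramletObj y X lam c β =
      norm2 (fun i => r i - (c - ybar) - (X *ᵥ β) i) + lam * norm1 β := fun c β => by
    simp only [sramletObj, r, sub_sub, add_sub_cancel]
  have hobj₀ : sramletObj y X lam ybar 0 = norm2 r := by simp [sramletObj, norm1, r]
  have hnorm : 0 < norm2 r := by
    rw [norm2_eq_norm_toLp]; simpa using hr
  rw [zeroThresh, div_le_iff₀ hnorm, ← forall_norm2_le_residual_iff X hlam.le hr hsum, hobj₀]
  simp only [hobj]
  exact ⟨fun h d β => by simpa using h (d + ybar) β, fun h c β => h (c - ybar) β⟩
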